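/- arXiv:0903.1425 — 4 statements merged into one kernel-verified Lean document; each statement's English description precedes it below -/
import Mathlib

section
/- Let H be a subgroup of a topological abelian group G that is both dually closed and dually embedded in G. Then n(H) = n(G), where H carries the subspace topology. -/
/-- The von Neumann radical of a topological abelian group: the intersection of the
kernels of all continuous characters into the circle group `ℝ/ℤ`. -/
noncomputable def vonNeumannRadical (G : Type*) [AddCommGroup G] [TopologicalSpace G] :
    AddSubgroup G :=
  ⨅ χ : ContinuousAddMonoidHom G (AddCircle (1 : ℝ)), χ.toAddMonoidHom.ker

/-- A subgroup `H` of a topological abelian group `G` is dually embedded if every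
continuous character of `H` (with the subspace topology) extends to a continuous
character of `G`. -/
def DuallyEmbedded {G : Type*} [AddCommGroup G] [TopologicalSpace G] (H : AddSubgroup G) : Prop :=
  ∀ χ : ContinuousAddMonoidHom H (AddCircle (1 : ℝ)),
    ∃ χ' : ContinuousAddMonoidHom G (AddCircle (1 : ℝ)), ∀ h : H, χ' h = χ h

/-- A subgroup `H` of a topological abelian group `G` is dually closed if every point
outside `H` is separated from `H` by a continuous character vanishing on `H`. -/
def DuallyClosed {G : Type*} [AddCommGroup G] [TopologicalSpace G] (H : AddSubgroup G) : Prop :=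
  ∀ x : G, x ∉ H → ∃ χ : ContinuousAddMonoidHom G (AddCircle (1 : ℝ)),
    (∀ h ∈ H, χ h = 0) ∧ χ x ≠ 0

section VonNeumannRadical

variable {A B : Type*} [AddCommGroup A] [TopologicalSpace A] [AddCommGroup B] [TopologicalSpace B]

theorem mem_vonNeumannRadical_iff {a : A} :
    a ∈ vonNeumannRadical A ↔ ∀ χ : ContinuousAddMonoidHom A (AddCircle (1 : ℝ)), χ a = 0 := by
  simp only [vonNeumannRadical, AddSubgroup.mem_iInf, AddMonoidHom.mem_ker]
  rfl

theorem map_vonNeumannRadical_le (f : ContinuousAddMonoidHom A B) :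
    (vonNeumannRadical A).map f.toAddMonoidHom ≤ vonNeumannRadical B := by
  rintro _ ⟨a, ha, rfl⟩
  exact mem_vonNeumannRadical_iff.2 fun χ => mem_vonNeumannRadical_iff.1 ha (χ.comp f)

theorem vonNeumannRadical_le_of_duallyClosed {H : AddSubgroup A} (hc : DuallyClosed H) :
    vonNeumannRadical A ≤ H := by
  intro x hx
  by_contra hxH
  obtain ⟨χ, -, hχx⟩ := hc x hxH
  exact hχx (mem_vonNeumannRadical_iff.1 hx χ)

theorem mem_vonNeumannRadical_of_duallyEmbedded {H : AddSubgroup A} (he : DuallyEmbedded H)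
    {h : H} (hh : (h : A) ∈ vonNeumannRadical A) : h ∈ vonNeumannRadical H := by
  refine mem_vonNeumannRadical_iff.2 fun χ => ?_
  obtain ⟨χ', hχ'⟩ := he χ
  rw [← hχ' h]
  exact mem_vonNeumannRadical_iff.1 hh χ'

end VonNeumannRadical

theorem statement3_general (G : Type*) [AddCommGroup G] [TopologicalSpace G]
    (H : AddSubgroup G) (hc : DuallyClosed H) (he : DuallyEmbedded H) :
    (vonNeumannRadical ↥H).map H.subtype = vonNeumannRadical G := by
  refine le_antisymm
    (map_vonNeumannRadical_le ⟨H.subtype, continuous_subtype_val⟩) fun x hx => ?_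
  have hxH : x ∈ H := vonNeumannRadical_le_of_duallyClosed hc hx
  exact ⟨⟨x, hxH⟩, mem_vonNeumannRadical_of_duallyEmbedded he hx, rfl⟩

/-- If `H` is a dually closed and dually embedded subgroup of a topological abelian
group `G`, then `n(H) = n(G)`. -/
theorem statement3 (G : Type*) [AddCommGroup G] [TopologicalSpace G] [IsTopologicalAddGroup G]
    (H : AddSubgroup G) (hc : DuallyClosed H) (he : DuallyEmbedded H) :
    (vonNeumannRadical ↥H).map H.subtype = vonNeumannRadical G :=
  statement3_general G H hc he
end

section
/- Let H be an open subgroup of a topological abelian group G. Then n(H) = n(G), where H carries the subspace topology. -/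
namespace AddCircle

noncomputable def ratToReal : AddCircle (1 : ℚ) →+ AddCircle (1 : ℝ) :=
  QuotientAddGroup.map _ _ (Rat.castHom ℝ).toAddMonoidHom <| by
    rintro q ⟨n, rfl⟩
    exact ⟨n, by simp⟩

theorem ratToReal_injective : Function.Injective ratToReal := by
  refine (injective_iff_map_eq_zero _).2 fun x hx => ?_
  induction x using QuotientAddGroup.induction_on with
  | H q =>
    replace hx : ((q : ℝ) : AddCircle (1 : ℝ)) = 0 := hx
    obtain ⟨n, hn⟩ := (coe_eq_zero_iff _).1 hx
    have hnq : (n : ℝ) = q := by simpa using hn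
    exact (coe_eq_zero_iff _).2 ⟨n, by rw [zsmul_one]; exact_mod_cast hnq⟩

theorem exists_addMonoidHom_apply_ne_zero {A : Type*} [AddCommGroup A] {a : A} (ha : a ≠ 0) :
    ∃ c : A →+ AddCircle (1 : ℝ), c a ≠ 0 := by
  obtain ⟨c, hc⟩ := CharacterModule.exists_character_apply_ne_zero_of_ne_zero ha
  exact ⟨ratToReal.comp c, fun h => hc (ratToReal_injective.eq_iff' (map_zero _) |>.1 h)⟩

end AddCircle

theorem AddMonoidHom.continuous_of_continuous_comp_subtype {G M : Type*} [AddGroup G]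
    [TopologicalSpace G] [IsTopologicalAddGroup G] [AddMonoid M] [TopologicalSpace M]
    [ContinuousAdd M] (f : G →+ M) {H : AddSubgroup G} (hH : IsOpen (H : Set G))
    (hf : Continuous (f.comp H.subtype)) : Continuous f := by
  refine continuous_of_continuousAt_zero f ?_
  have : ContinuousOn f H := continuousOn_iff_continuous_domRestrict.2 hf
  exact this.continuousAt (hH.mem_nhds H.zero_mem)

section vonNeumannRadical

variable {G : Type*} [AddCommGroup G] [TopologicalSpace G]

theorem mem_vonNeumannRadical {x : G} :
    x ∈ vonNeumannRadical G ↔ ∀ χ : ContinuousAddMonoidHom G (AddCircle (1 : ℝ)), χ x = 0 :=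
  AddSubgroup.mem_iInf

theorem map_vonNeumannRadical_le_s4 {G' : Type*} [AddCommGroup G'] [TopologicalSpace G']
    (f : ContinuousAddMonoidHom G G') :
    (vonNeumannRadical G).map f.toAddMonoidHom ≤ vonNeumannRadical G' := by
  rintro _ ⟨x, hx, rfl⟩
  exact mem_vonNeumannRadical.2 fun χ => mem_vonNeumannRadical.1 hx (χ.comp f)

variable [IsTopologicalAddGroup G] {H : AddSubgroup G}

theorem ContinuousAddMonoidHom.exists_extend_of_isOpen (hH : IsOpen (H : Set G))
    (χ : ContinuousAddMonoidHom H (AddCircle (1 : ℝ))) :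
    ∃ ψ : ContinuousAddMonoidHom G (AddCircle (1 : ℝ)), ∀ h : H, ψ h = χ h := by
  obtain ⟨ψ, hψ⟩ := (Module.Baer.of_divisible (AddCircle (1 : ℝ))).extension_property_addMonoidHom
    H.subtype Subtype.coe_injective χ.toAddMonoidHom
  refine ⟨⟨ψ, ψ.continuous_of_continuous_comp_subtype hH (hψ ▸ χ.continuous)⟩,
    fun h => DFunLike.congr_fun hψ h⟩

theorem vonNeumannRadical_le_of_isOpen (hH : IsOpen (H : Set G)) : vonNeumannRadical G ≤ H := by
  intro x hx
  by_contra hxH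
  have : DiscreteTopology (G ⧸ H) := QuotientAddGroup.discreteTopology hH
  obtain ⟨c, hc⟩ := AddCircle.exists_addMonoidHom_apply_ne_zero
    (mt (QuotientAddGroup.eq_zero_iff x).1 hxH)
  exact hc <| mem_vonNeumannRadical.1 hx
    ⟨c.comp (QuotientAddGroup.mk' H),
      (continuous_of_discreteTopology (f := c)).comp QuotientAddGroup.continuous_mk⟩

end vonNeumannRadical

/-- If `H` is an open subgroup of a topological abelian group `G`, then `n(H) = n(G)`. -/
theorem statement4 (G : Type*) [AddCommGroup G] [TopologicalSpace G] [IsTopologicalAddGroup G]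
    (H : AddSubgroup G) (hH : IsOpen (H : Set G)) :
    (vonNeumannRadical ↥H).map H.subtype = vonNeumannRadical G := by
  refine le_antisymm (map_vonNeumannRadical_le_s4 ⟨H.subtype, continuous_subtype_val⟩) fun x hx => ?_
  have hxH : x ∈ H := vonNeumannRadical_le_of_isOpen hH hx
  refine ⟨⟨x, hxH⟩, mem_vonNeumannRadical.2 fun χ => ?_, rfl⟩
  obtain ⟨ψ, hψ⟩ := χ.exists_extend_of_isOpen hH
  rw [← hψ]
  exact mem_vonNeumannRadical.1 hx ψ
end

section
/- Let p be a prime. In the group G = (ℤ/pℤ) × ℤ define the sequence d by d_{2n−1} = (1, f_n) and d_{2n} = (0, p^n) for n ≥ 1, where f_n = Σ_{i=0}^{n} p^{n³ − i·n}. Then there exists a Hausdorff group topology τ on G in which d_n converges to zero and such that the von Neumann radical n(G,τ) equals the subgroup (ℤ/pℤ) × {0}; in particular (G,τ) is almost maximally almost-periodic. -/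
/-- `f p n = ∑_{i=0}^{n} p^(n³ - i·n)`. -/
def fseq (p : ℕ) (n : ℕ) : ℤ := ∑ i ∈ Finset.range (n + 1), (p : ℤ) ^ (n ^ 3 - i * n)

/-- The sequence `d` in `(ℤ/pℤ) × ℤ`: `d (2n-1) = (1, f p n)` and `d (2n) = (0, p^n)`. -/
def dseq (p : ℕ) : ℕ → ZMod p × ℤ := fun k =>
  if k % 2 = 1 then (1, fseq p ((k + 1) / 2)) else (0, (p : ℤ) ^ (k / 2))

open Finset Filter Topology

theorem Finset.sum_range_two_mul {M : Type*} [AddCommMonoid M] (g : ℕ → M) (K : ℕ) :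
    ∑ j ∈ range (2 * K), g j = ∑ k ∈ range K, (g (2 * k) + g (2 * k + 1)) := by
  induction K with
  | zero => simp
  | succ K ih => rw [mul_add, sum_range_succ, sum_range_succ, sum_range_succ, ih, add_assoc]

theorem Int.not_dvd_add_of_abs_lt {q x y : ℤ} (hxy : |x| < |y|) (hy : 2 * |y| ≤ q) :
    ¬ q ∣ x + y := by
  intro h
  have hsum : x + y = 0 :=
    Int.eq_zero_of_abs_lt_dvd h (by linarith [abs_add_le x y])
  rw [eq_neg_of_add_eq_zero_right hsum, abs_neg] at hxy
  exact lt_irrefl _ hxy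

theorem Int.not_pow_natAbs_dvd {p : ℕ} (hp : 2 ≤ p) {z : ℤ} (hz : z ≠ 0) :
    ¬ (p : ℤ) ^ z.natAbs ∣ z := by
  intro h
  have hle : p ^ z.natAbs ≤ z.natAbs := by
    simpa using Nat.le_of_dvd (Int.natAbs_pos.mpr hz) (Int.natAbs_dvd_natAbs.mpr h)
  have := Nat.lt_two_pow_self (n := z.natAbs)
  have := Nat.pow_le_pow_left hp z.natAbs
  omega

theorem Nat.exists_window_disjoint (S : Finset ℕ) {k : ℕ} (hS : S.card < k) (b : ℕ) {m : ℕ}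
    (hm : 0 < m) : ∃ i < k, ∀ e ∈ S, ¬ (b + i * m ≤ e ∧ e < b + i * m + m) := by
  obtain ⟨i, hi, hiS⟩ := exists_mem_notMem_of_card_lt_card
    (s := S.image fun e => (e - b) / m) (t := range k) (Finset.card_image_le.trans_lt (by simpa))
  refine ⟨i, mem_range.mp hi, fun e he hwin => hiS (mem_image.mpr ⟨e, he, ?_⟩)⟩
  exact Nat.div_eq_of_lt_le (by omega) (by rw [add_mul, one_mul]; omega)

theorem two_mul_add_two_le_two_pow {L : ℕ} (hL : 3 ≤ L) : 2 * L + 2 ≤ 2 ^ L := by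
  obtain ⟨t, rfl⟩ : ∃ t, L = t + 3 := ⟨L - 3, by omega⟩
  have := Nat.lt_two_pow_self (n := t)
  rw [pow_add]
  omega

theorem abs_sum_range_mul_pow_lt {p : ℕ} (hp : 2 ≤ p) (c : ℕ → ℤ) {g s : ℕ}
    (hc : ∑ e ∈ range g, (c e).natAbs ≤ s) :
    |∑ e ∈ range g, c e * (p : ℤ) ^ e| < (p : ℤ) ^ (s + g) := by
  have hp1 : (1 : ℤ) ≤ p := by exact_mod_cast (by omega : 1 ≤ p)
  calc |∑ e ∈ range g, c e * (p : ℤ) ^ e|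
      ≤ ∑ e ∈ range g, |c e| * (p : ℤ) ^ g := by
        refine (abs_sum_le_sum_abs _ _).trans (sum_le_sum fun e he => ?_)
        rw [abs_mul, abs_pow, abs_of_pos (by omega : (0 : ℤ) < p)]
        exact mul_le_mul_of_nonneg_left (pow_le_pow_right₀ hp1 (mem_range.mp he).le) (abs_nonneg _)
    _ = ((∑ e ∈ range g, (c e).natAbs : ℕ) : ℤ) * (p : ℤ) ^ g := by push_cast; rw [sum_mul]
    _ ≤ (s : ℤ) * (p : ℤ) ^ g := by gcongr
    _ < (p : ℤ) ^ s * (p : ℤ) ^ g := by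
        gcongr
        exact_mod_cast Nat.lt_two_pow_self.trans_le (Nat.pow_le_pow_left hp s)
    _ = (p : ℤ) ^ (s + g) := (pow_add _ _ _).symm

theorem card_filter_ne_zero_le_sum_natAbs (c : ℕ → ℤ) (N : ℕ) :
    ((range N).filter (c · ≠ 0)).card ≤ ∑ e ∈ range N, (c e).natAbs := by
  rw [card_filter]
  refine sum_le_sum fun e _ => ?_
  split_ifs with h
  · exact Int.natAbs_pos.mpr h
  · exact Nat.zero_le _

theorem pow_le_sum_range_pow_add_mul (p : ℕ) (b m i : ℕ) :
    (p : ℤ) ^ (b + i * m) ≤ ∑ u ∈ range (i + 1), (p : ℤ) ^ (b + u * m) :=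
  single_le_sum (f := fun u => (p : ℤ) ^ (b + u * m)) (fun _ _ => by positivity)
    (self_mem_range_succ i)

theorem sum_range_pow_add_mul_le {p : ℕ} (hp : 1 ≤ p) (b m i : ℕ) :
    ∑ u ∈ range (i + 1), (p : ℤ) ^ (b + u * m) ≤ (i + 1) * (p : ℤ) ^ (b + i * m) := by
  have := sum_le_card_nsmul (range (i + 1)) (fun u => (p : ℤ) ^ (b + u * m)) _ fun u hu =>
    pow_le_pow_right₀ (by exact_mod_cast hp)
      (Nat.add_le_add_left (Nat.mul_le_mul_right m (Nat.lt_succ_iff.mp (mem_range.mp hu))) b)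
  simpa using this

theorem AddCircle.norm_nsmul_eq_mul_norm {n : ℕ} {z : AddCircle (1 : ℝ)} (hz : n * ‖z‖ ≤ 1 / 2) :
    ‖n • z‖ = n * ‖z‖ := by
  obtain ⟨y, rfl, hy⟩ : ∃ y : ℝ, z = y ∧ |y| ≤ 1 / 2 := by
    obtain ⟨x, rfl⟩ := QuotientAddGroup.mk_surjective z
    refine ⟨x - round x, ?_, abs_sub_round x⟩
    have hround : ((round x : ℝ) : AddCircle (1 : ℝ)) = 0 :=
      (AddCircle.coe_eq_zero_iff 1).mpr ⟨round x, by simp⟩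
    rw [AddCircle.coe_sub, hround, sub_zero]
  have hnorm : ∀ t : ℝ, |t| ≤ 1 / 2 → ‖(t : AddCircle (1 : ℝ))‖ = |t| := fun t ht =>
    (AddCircle.norm_coe_eq_abs_iff _ one_ne_zero).mpr (by rwa [abs_one])
  rw [hnorm y hy] at hz ⊢
  rw [← AddCircle.coe_nsmul, nsmul_eq_mul, hnorm _ (by rwa [abs_mul, Nat.abs_cast]), abs_mul,
    Nat.abs_cast]

theorem AddCircle.exists_pow_nsmul_eq_zero_of_tendsto {P : ℕ} (hP : 0 < P) {b : AddCircle (1 : ℝ)}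
    (hb : Tendsto (fun n => P ^ n • b) atTop (𝓝 0)) : ∃ k, P ^ k • b = 0 := by
  have hnorm : Tendsto (fun n => ‖P ^ n • b‖) atTop (𝓝 0) := by simpa using hb.norm
  have hε : (0 : ℝ) < 1 / (2 * P) := by positivity
  obtain ⟨N, hN⟩ := eventually_atTop.mp (hnorm.eventually (ge_mem_nhds hε))
  have hgrow : ∀ j, ‖P ^ N • b‖ ≤ ‖P ^ (j + N) • b‖ := by
    intro j
    induction j with
    | zero => rw [zero_add]
    | succ j ih =>
      have hsmall : (P : ℝ) * ‖P ^ (j + N) • b‖ ≤ 1 / 2 := by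
        have := hN (j + N) (by omega)
        rw [le_div_iff₀ (by positivity)] at this
        linarith
      rw [Nat.add_right_comm, pow_succ', mul_smul, AddCircle.norm_nsmul_eq_mul_norm hsmall]
      exact ih.trans (le_mul_of_one_le_left (norm_nonneg _) (by exact_mod_cast hP))
  exact ⟨N, norm_le_zero_iff.mp (ge_of_tendsto' (hnorm.comp (tendsto_add_atTop_nat N)) hgrow)⟩

theorem fseq_eq_sum (p n : ℕ) :
    fseq p n = ∑ u ∈ range (n + 1), (p : ℤ) ^ (n ^ 3 - n ^ 2 + u * n) := by
  rw [fseq, ← sum_range_reflect]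
  refine sum_congr rfl fun u hu => ?_
  have hu : u ≤ n := Nat.lt_succ_iff.mp (mem_range.mp hu)
  have hsq : (n - u) * n + u * n = n ^ 2 := by rw [← add_mul, Nat.sub_add_cancel hu]; ring
  have hcube : n ^ 2 ≤ n ^ 3 := by
    rcases Nat.eq_zero_or_pos n with rfl | hn
    · simp
    · exact Nat.pow_le_pow_right hn (by norm_num)
  rw [show n + 1 - 1 - u = n - u by omega]
  congr 1
  omega

theorem pow_dvd_fseq {p n g : ℕ} (hg : g ≤ n ^ 3 - n ^ 2) : (p : ℤ) ^ g ∣ fseq p n := by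
  rw [fseq_eq_sum]
  exact dvd_sum fun u _ => pow_dvd_pow _ (by omega)

theorem pow_dvd_fseq_succ (p : ℕ) {g n : ℕ} (hg : g ≤ (n + 1) ^ 2 * n) :
    (p : ℤ) ^ g ∣ fseq p (n + 1) :=
  pow_dvd_fseq (by rw [show (n + 1) ^ 3 = (n + 1) ^ 2 * n + (n + 1) ^ 2 by ring]; omega)

theorem pow_dvd_fseq_sub_sum (p : ℕ) {n i : ℕ} (hi : i ≤ n) :
    (p : ℤ) ^ (n ^ 3 - n ^ 2 + (i + 1) * n) ∣
      fseq p n - ∑ u ∈ range (i + 1), (p : ℤ) ^ (n ^ 3 - n ^ 2 + u * n) := by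
  rw [fseq_eq_sum, ← sum_range_add_sum_Ico _ (by omega : i + 1 ≤ n + 1), add_sub_cancel_left]
  exact dvd_sum fun u hu =>
    pow_dvd_pow _ (Nat.add_le_add_left (Nat.mul_le_mul_right _ (mem_Ico.mp hu).1) _)

@[simp]
theorem dseq_two_mul (p k : ℕ) : dseq p (2 * k) = (0, (p : ℤ) ^ k) := by
  simp [dseq]

@[simp]
theorem dseq_two_mul_add_one (p k : ℕ) : dseq p (2 * k + 1) = (1, fseq p (k + 1)) := by
  simp [dseq, Nat.add_mod, show (2 * k + 1 + 1) / 2 = k + 1 by omega]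

theorem pow_half_dvd_dseq_snd (p j : ℕ) : (p : ℤ) ^ (j / 2) ∣ (dseq p j).2 := by
  obtain ⟨k, rfl | rfl⟩ := Nat.even_or_odd' j
  · simp
  · rw [dseq_two_mul_add_one, show (2 * k + 1) / 2 = k by omega]
    exact pow_dvd_fseq_succ p (Nat.le_mul_of_pos_left _ (by positivity))

theorem pow_dvd_sum_range_add_of_gap {p n i g w : ℕ} {a : ℤ} {c : ℕ → ℤ} (hi : i ≤ n)
    (hw : w ≤ n ^ 3 - n ^ 2 + (i + 1) * n) (hgw : g ≤ w) (hwn : w ≤ n ^ 3)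
    (hgap : ∀ e, g ≤ e → e < w → c e = 0)
    (hdvd : (p : ℤ) ^ (n ^ 3) ∣ a * fseq p n + ∑ e ∈ range (n ^ 3), c e * (p : ℤ) ^ e) :
    (p : ℤ) ^ w ∣ ∑ e ∈ range g, c e * (p : ℤ) ^ e +
      a * ∑ u ∈ range (i + 1), (p : ℤ) ^ (n ^ 3 - n ^ 2 + u * n) := by
  have hfseq := ((pow_dvd_pow (p : ℤ) hw).trans (pow_dvd_fseq_sub_sum p hi)).mul_left a
  have htail : (p : ℤ) ^ w ∣ ∑ e ∈ Ico g (n ^ 3), c e * (p : ℤ) ^ e := by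
    refine dvd_sum fun e he => ?_
    rcases lt_or_ge e w with hew | hwe
    · simp [hgap e (mem_Ico.mp he).1 hew]
    · exact (pow_dvd_pow _ hwe).mul_left _
  have hall := (pow_dvd_pow (p : ℤ) hwn).trans hdvd
  rw [← sum_range_add_sum_Ico _ (hgw.trans hwn)] at hall
  exact (dvd_sub hall (dvd_add hfseq htail)).trans (dvd_of_eq (by ring))

theorem not_pow_dvd_mul_fseq_add_sum {p n s : ℕ} (hp : 2 ≤ p) {a : ℤ} (ha : a ≠ 0) (c : ℕ → ℤ)
    (hc : ∑ e ∈ range (n ^ 3), (c e).natAbs ≤ s) (hsn : s < n)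
    (hsize : 2 * a.natAbs * (n + 1) < 2 ^ (n - s)) :
    ¬ (p : ℤ) ^ (n ^ 3) ∣ a * fseq p n + ∑ e ∈ range (n ^ 3), c e * (p : ℤ) ^ e := by
  intro hdvd
  set v := n ^ 3 - n ^ 2
  have hcube : n ^ 2 + s ≤ n ^ 3 := by
    obtain ⟨m, rfl⟩ : ∃ m, n = m + 1 := ⟨n - 1, by omega⟩
    nlinarith [Nat.zero_le (m * m * m), Nat.zero_le (m * m)]
  -- fewer than `n` exponents below `n ^ 3` carry a nonzero `c e`, so one of `n` windows has none
  obtain ⟨i, hi, hgap⟩ := Nat.exists_window_disjoint ((range (n ^ 3)).filter (c · ≠ 0))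
    (((card_filter_ne_zero_le_sum_natAbs c _).trans hc).trans_lt hsn) (v - s) (by omega : 0 < n)
  set g := v - s + i * n
  set head := ∑ u ∈ range (i + 1), (p : ℤ) ^ (v + u * n)
  have hin : (i + 1) * n ≤ n * n := Nat.mul_le_mul_right _ hi
  rw [add_mul, one_mul, ← sq] at hin
  have hwin : (p : ℤ) ^ (g + n) ∣ ∑ e ∈ range g, c e * (p : ℤ) ^ e + a * head :=
    pow_dvd_sum_range_add_of_gap hi.le (by rw [add_mul, one_mul]; omega) (by omega) (by omega)
      (fun e hge hlt => by_contra fun hce =>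
        hgap e (mem_filter.mpr ⟨mem_range.mpr (by omega), hce⟩) ⟨hge, hlt⟩) hdvd
  have hhead_pos : 0 < head :=
    (pow_pos (by omega) _).trans_le (pow_le_sum_range_pow_add_mul p v n i)
  refine Int.not_dvd_add_of_abs_lt ?_ ?_ hwin
  · have hcg : ∑ e ∈ range g, (c e).natAbs ≤ s :=
      (sum_le_sum_of_subset (range_subset_range.mpr (by omega))).trans hc
    calc |∑ e ∈ range g, c e * (p : ℤ) ^ e| < (p : ℤ) ^ (s + g) := abs_sum_range_mul_pow_lt hp c hcg
      _ = (p : ℤ) ^ (v + i * n) := by congr 1; omega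
      _ ≤ head := pow_le_sum_range_pow_add_mul p v n i
      _ ≤ |a * head| := by
          rw [abs_mul, abs_of_pos hhead_pos]
          exact le_mul_of_one_le_left hhead_pos.le (Int.one_le_abs ha)
  · have hsize' : ((2 * a.natAbs * (n + 1) : ℕ) : ℤ) ≤ (p : ℤ) ^ (n - s) := by
      exact_mod_cast hsize.le.trans (Nat.pow_le_pow_left hp _)
    push_cast at hsize'
    calc 2 * |a * head| ≤ 2 * |a| * ((i + 1) * (p : ℤ) ^ (v + i * n)) := by
          rw [abs_mul, abs_of_pos hhead_pos, mul_assoc]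
          gcongr
          exact sum_range_pow_add_mul_le (by omega) v n i
      _ ≤ 2 * |a| * (n + 1) * (p : ℤ) ^ (v + i * n) := by
          rw [← mul_assoc]; gcongr
      _ ≤ (p : ℤ) ^ (n - s) * (p : ℤ) ^ (v + i * n) :=
          mul_le_mul_of_nonneg_right hsize' (by positivity)
      _ = (p : ℤ) ^ (g + n) := by rw [← pow_add]; congr 1; omega

namespace AmapExample

def weight (l : ℕ →₀ ℤ) (T : ℕ) : ℕ := ∑ i ∈ range T, (l i).natAbs

theorem natAbs_le_weight (l : ℕ →₀ ℤ) {i T : ℕ} (h : i < T) : (l i).natAbs ≤ weight l T :=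
  single_le_sum (f := fun i => (l i).natAbs) (fun _ _ => Nat.zero_le _) (mem_range.mpr h)

theorem weight_add_le (l₁ l₂ : ℕ →₀ ℤ) (T : ℕ) :
    weight (l₁ + l₂) T ≤ weight l₁ T + weight l₂ T := by
  rw [weight, weight, weight, ← sum_add_distrib]
  exact sum_le_sum fun i _ => Int.natAbs_add_le _ _

@[simp]
theorem weight_neg (l : ℕ →₀ ℤ) (T : ℕ) : weight (-l) T = weight l T := by
  simp [weight]

theorem weight_single_one (n T : ℕ) : weight (Finsupp.single n 1) T = if n < T then 1 else 0 := by
  simp [weight, Finsupp.single_apply, apply_ite]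

def slowCoeffs (m : ℕ) : Set (ℕ →₀ ℤ) := {l | ∀ T, 2 ^ m * weight l T ≤ Nat.log 2 T}

theorem zero_mem_slowCoeffs (m : ℕ) : 0 ∈ slowCoeffs m := fun T => by simp [weight]

theorem slowCoeffs_anti : Antitone slowCoeffs := fun _ _ h _ hl T =>
  (Nat.mul_le_mul_right _ (Nat.pow_le_pow_right two_pos h)).trans (hl T)

theorem add_mem_slowCoeffs {m : ℕ} {l₁ l₂ : ℕ →₀ ℤ} (h₁ : l₁ ∈ slowCoeffs (m + 1))
    (h₂ : l₂ ∈ slowCoeffs (m + 1)) : l₁ + l₂ ∈ slowCoeffs m := fun T => by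
  have := Nat.mul_le_mul_left (2 ^ m) (weight_add_le l₁ l₂ T)
  have := h₁ T
  have := h₂ T
  rw [pow_succ] at *
  nlinarith

theorem neg_mem_slowCoeffs {m : ℕ} {l : ℕ →₀ ℤ} (h : l ∈ slowCoeffs m) : -l ∈ slowCoeffs m :=
  fun T => by rw [weight_neg]; exact h T

theorem single_mem_slowCoeffs {m n : ℕ} (hn : 2 ^ 2 ^ m ≤ n + 1) :
    Finsupp.single n 1 ∈ slowCoeffs m := fun T => by
  rw [weight_single_one]
  split_ifs with h
  · simpa [Nat.log_pow] using Nat.log_mono_right (b := 2) (hn.trans h)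
  · simp

theorem two_pow_two_pow_le_of_mem_slowCoeffs {m j : ℕ} {l : ℕ →₀ ℤ} (hl : l ∈ slowCoeffs m)
    (hj : l j ≠ 0) : 2 ^ 2 ^ m ≤ j + 1 := by
  have hw : 1 ≤ weight l (j + 1) :=
    (Int.natAbs_pos.mpr hj).trans_le (natAbs_le_weight l j.lt_succ_self)
  have hlog : 2 ^ m ≤ Nat.log 2 (j + 1) := by nlinarith [hl (j + 1)]
  exact (Nat.pow_le_pow_right two_pos hlog).trans (Nat.pow_log_le_self 2 j.succ_ne_zero)

def nbhd (p m : ℕ) : Set (ZMod p × ℤ) := Finsupp.linearCombination ℤ (dseq p) '' slowCoeffs m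

noncomputable abbrev nbhdBasis (p : ℕ) : AddGroupFilterBasis (ZMod p × ℤ) :=
  addGroupFilterBasisOfComm (Set.range (nbhd p)) (Set.range_nonempty _)
    (by
      rintro _ _ ⟨m₁, rfl⟩ ⟨m₂, rfl⟩
      exact ⟨nbhd p (max m₁ m₂), ⟨_, rfl⟩, Set.subset_inter
        (Set.image_mono (slowCoeffs_anti (le_max_left _ _)))
        (Set.image_mono (slowCoeffs_anti (le_max_right _ _)))⟩)
    (by
      rintro _ ⟨m, rfl⟩
      exact ⟨0, zero_mem_slowCoeffs m, map_zero _⟩)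
    (by
      rintro _ ⟨m, rfl⟩
      refine ⟨nbhd p (m + 1), ⟨_, rfl⟩, ?_⟩
      rintro _ ⟨_, ⟨l₁, h₁, rfl⟩, _, ⟨l₂, h₂, rfl⟩, rfl⟩
      exact ⟨l₁ + l₂, add_mem_slowCoeffs h₁ h₂, map_add _ _ _⟩)
    (by
      rintro _ ⟨m, rfl⟩
      refine ⟨nbhd p m, ⟨_, rfl⟩, ?_⟩
      rintro _ ⟨l, hl, rfl⟩
      exact ⟨-l, neg_mem_slowCoeffs hl, map_neg _ _⟩)

noncomputable abbrev tau (p : ℕ) : TopologicalSpace (ZMod p × ℤ) := (nbhdBasis p).topology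

theorem isTopologicalAddGroup_tau (p : ℕ) : @IsTopologicalAddGroup _ (tau p) _ :=
  (nbhdBasis p).isTopologicalAddGroup

theorem hasBasis_nhds_zero_tau (p : ℕ) :
    (@nhds _ (tau p) 0).HasBasis (fun _ : ℕ => True) (nbhd p) :=
  (nbhdBasis p).nhds_zero_hasBasis.to_hasBasis (fun _ ⟨m, hm⟩ => ⟨m, trivial, hm.le⟩)
    (fun m _ => ⟨nbhd p m, ⟨m, rfl⟩, le_rfl⟩)

theorem tendsto_dseq_tau (p : ℕ) : Tendsto (dseq p) atTop (@nhds _ (tau p) 0) :=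
  (hasBasis_nhds_zero_tau p).tendsto_right_iff.mpr fun m _ =>
    eventually_atTop.mpr ⟨2 ^ 2 ^ m, fun n hn =>
      ⟨Finsupp.single n 1, single_mem_slowCoeffs (by omega), by simp⟩⟩

theorem pow_dvd_snd_of_mem_nbhd {p m : ℕ} {x : ZMod p × ℤ} (hx : x ∈ nbhd p m) :
    (p : ℤ) ^ m ∣ x.2 := by
  obtain ⟨l, hl, rfl⟩ := hx
  rw [Finsupp.linearCombination_apply, Finsupp.sum, Prod.snd_sum]
  refine dvd_sum fun j hj => ?_
  have hj := two_pow_two_pow_le_of_mem_slowCoeffs hl (Finsupp.mem_support_iff.mp hj)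
  have hm : m + 1 ≤ 2 ^ m := Nat.lt_two_pow_self
  have := Nat.pow_le_pow_right two_pos hm
  rw [pow_succ] at this
  rw [Prod.smul_snd, smul_eq_mul]
  exact ((pow_dvd_pow _ (by omega)).trans (pow_half_dvd_dseq_snd p j)).mul_left _

theorem linearCombination_dseq_eq_sum_range {p K : ℕ} {l : ℕ →₀ ℤ}
    (hK : l.support ⊆ range (2 * K)) :
    Finsupp.linearCombination ℤ (dseq p) l =
      ∑ k ∈ range K, (l (2 * k) • dseq p (2 * k) + l (2 * k + 1) • dseq p (2 * k + 1)) := by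
  rw [Finsupp.linearCombination_apply, Finsupp.sum_of_support_subset l hK _ (by simp),
    sum_range_two_mul]

theorem pow_dvd_of_snd_linearCombination_dseq_eq_zero {p k : ℕ} {l : ℕ →₀ ℤ}
    (hmin : ∀ j < k, l (2 * j + 1) = 0) (h : (Finsupp.linearCombination ℤ (dseq p) l).2 = 0) :
    (p : ℤ) ^ ((k + 1) ^ 3) ∣
      l (2 * k + 1) * fseq p (k + 1) + ∑ e ∈ range ((k + 1) ^ 3), l (2 * e) * (p : ℤ) ^ e := by
  set N := (k + 1) ^ 3
  obtain ⟨K, hK⟩ := l.support.exists_nat_subset_range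
  have hkN : k < N := Nat.lt_of_lt_of_le k.lt_succ_self (Nat.le_self_pow (by norm_num) _)
  rw [linearCombination_dseq_eq_sum_range (K := K + N)
      (hK.trans (range_subset_range.mpr (by omega))), Prod.snd_sum] at h
  simp only [Prod.snd_add, Prod.smul_snd, dseq_two_mul, dseq_two_mul_add_one, smul_eq_mul,
    sum_add_distrib] at h
  rw [← sum_range_add_sum_Ico _ (by omega : N ≤ K + N),
    ← add_sum_erase _ _ (mem_range.mpr (by omega : k < K + N))] at h
  have heven : (p : ℤ) ^ N ∣ ∑ j ∈ Ico N (K + N), l (2 * j) * (p : ℤ) ^ j :=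
    dvd_sum fun j hj => (pow_dvd_pow _ (mem_Ico.mp hj).1).mul_left _
  have hodd : (p : ℤ) ^ N ∣ ∑ j ∈ (range (K + N)).erase k, l (2 * j + 1) * fseq p (j + 1) := by
    refine dvd_sum fun j hj => ?_
    rcases lt_or_gt_of_ne (ne_of_mem_erase hj) with hjk | hjk
    · simp [hmin j hjk]
    · refine (pow_dvd_fseq_succ p ?_).mul_left _
      calc N = (k + 1) ^ 2 * (k + 1) := by ring
        _ ≤ (j + 1) ^ 2 * j := Nat.mul_le_mul (Nat.pow_le_pow_left (by omega) 2) hjk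
  have hsum : l (2 * k + 1) * fseq p (k + 1) + ∑ e ∈ range N, l (2 * e) * (p : ℤ) ^ e =
      -(∑ j ∈ Ico N (K + N), l (2 * j) * (p : ℤ) ^ j +
        ∑ j ∈ (range (K + N)).erase k, l (2 * j + 1) * fseq p (j + 1)) := by
    linear_combination h
  rw [hsum]
  exact (dvd_add heven hodd).neg_right

theorem natAbs_add_sum_even_le_weight (l : ℕ →₀ ℤ) {k N : ℕ} (hk : k < N) :
    (l (2 * k + 1)).natAbs + ∑ e ∈ range N, (l (2 * e)).natAbs ≤ weight l (2 * N) := by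
  rw [weight, sum_range_two_mul, sum_add_distrib, add_comm]
  gcongr
  exact single_le_sum (f := fun e => (l (2 * e + 1)).natAbs) (fun _ _ => Nat.zero_le _)
    (mem_range.mpr hk)

theorem lt_and_mul_lt_two_pow_of_le_log {n a s M : ℕ} (ha : 1 ≤ a) (hM : a + s ≤ M)
    (hlog : 16 * M ≤ Nat.log 2 (2 * n ^ 3)) : s < n ∧ 2 * a * (n + 1) < 2 ^ (n - s) := by
  have hn : n ≠ 0 := by rintro rfl; simp at hlog; omega
  set L := Nat.log 2 n
  have hnL : n < 2 ^ (L + 1) := Nat.lt_pow_succ_log_self one_lt_two n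
  have hLn : 2 ^ L ≤ n := Nat.pow_log_le_self 2 hn
  have hlog3 : Nat.log 2 (2 * n ^ 3) < 3 * L + 4 := by
    refine Nat.log_lt_of_lt_pow (by positivity) ?_
    calc 2 * n ^ 3 < 2 * (2 ^ (L + 1)) ^ 3 := by gcongr
      _ = 2 ^ (3 * L + 4) := by ring
  have hL2 := two_mul_add_two_le_two_pow (by omega : 3 ≤ L)
  have haM : a < 2 ^ M := (by omega : a ≤ M).trans_lt Nat.lt_two_pow_self
  refine ⟨by omega, ?_⟩
  calc 2 * a * (n + 1) < 2 * 2 ^ M * (n + 1) := by gcongr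
    _ ≤ 2 * 2 ^ M * 2 ^ (L + 1) := by gcongr; exact hnL
    _ = 2 ^ (M + L + 2) := by ring
    _ ≤ 2 ^ (n - s) := Nat.pow_le_pow_right two_pos (by omega)

theorem mk_zero_notMem_nbhd_four {p : ℕ} (hp : 2 ≤ p) {a : ZMod p} (ha : a ≠ 0) :
    ((a, 0) : ZMod p × ℤ) ∉ nbhd p 4 := by
  rintro ⟨l, hl, hla⟩
  have hodd : ∃ k, l (2 * k + 1) ≠ 0 := by
    by_contra! h
    obtain ⟨K, hK⟩ := l.support.exists_nat_subset_range
    have hfst := congrArg Prod.fst hla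
    rw [linearCombination_dseq_eq_sum_range (K := K)
      (hK.trans (range_subset_range.mpr (by omega))), Prod.fst_sum] at hfst
    simp [h] at hfst
    exact ha hfst.symm
  classical
  set k := Nat.find hodd
  have hk : l (2 * k + 1) ≠ 0 := Nat.find_spec hodd
  have hdvd := pow_dvd_of_snd_linearCombination_dseq_eq_zero (fun j hj => by
    simpa using Nat.find_min hodd hj) (congrArg Prod.snd hla)
  have hkN : k < (k + 1) ^ 3 := Nat.lt_of_lt_of_le k.lt_succ_self (Nat.le_self_pow three_ne_zero _)
  obtain ⟨hsn, hsize⟩ := lt_and_mul_lt_two_pow_of_le_log (Int.natAbs_pos.mpr hk)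
    (natAbs_add_sum_even_le_weight l hkN) (hl (2 * (k + 1) ^ 3))
  exact not_pow_dvd_mul_fseq_add_sum hp hk (fun e => l (2 * e)) le_rfl hsn hsize hdvd

theorem t2Space_tau {p : ℕ} (hp : 2 ≤ p) : @T2Space _ (tau p) := by
  let := tau p
  have := isTopologicalAddGroup_tau p
  refine IsTopologicalAddGroup.t2Space_of_zero_sep fun x hx => ?_
  by_cases h2 : x.2 = 0
  · refine ⟨nbhd p 4, (hasBasis_nhds_zero_tau p).mem_of_mem trivial, fun hmem => ?_⟩
    exact mk_zero_notMem_nbhd_four hp (a := x.1) (fun h1 => hx (Prod.ext h1 h2))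
      (by rwa [← h2])
  · exact ⟨nbhd p x.2.natAbs, (hasBasis_nhds_zero_tau p).mem_of_mem trivial,
      fun hmem => Int.not_pow_natAbs_dvd hp h2 (pow_dvd_snd_of_mem_nbhd hmem)⟩

noncomputable def sndChar (p N : ℕ) [NeZero N] : ZMod p × ℤ →+ AddCircle (1 : ℝ) :=
  ZMod.toAddCircle.comp ((Int.castAddHom (ZMod N)).comp (AddMonoidHom.snd (ZMod p) ℤ))

theorem sndChar_eq_zero_iff {p N : ℕ} [NeZero N] {x : ZMod p × ℤ} :
    sndChar p N x = 0 ↔ (N : ℤ) ∣ x.2 := by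
  simp [sndChar, ZMod.intCast_zmod_eq_zero_iff_dvd]

theorem continuous_sndChar (p m : ℕ) [NeZero p] :
    @Continuous _ _ (tau p) _ (sndChar p (p ^ m)) := by
  let := tau p
  have := isTopologicalAddGroup_tau p
  refine continuous_of_continuousAt_zero _ (tendsto_nhds_of_eventually_eq ?_)
  filter_upwards [(hasBasis_nhds_zero_tau p).mem_of_mem (i := m) trivial] with x hx
  rw [map_zero, sndChar_eq_zero_iff]
  exact_mod_cast pow_dvd_snd_of_mem_nbhd hx

theorem eq_zero_of_tendsto_comp_dseq {p : ℕ} (hp : 0 < p) (χ : ZMod p × ℤ →+ AddCircle (1 : ℝ))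
    (hχ : Tendsto (χ ∘ dseq p) atTop (𝓝 0)) : χ (1, 0) = 0 := by
  set b := χ (0, 1)
  have htwo : Tendsto (fun n : ℕ => 2 * n) atTop atTop := tendsto_id.const_mul_atTop' two_pos
  have heven : ∀ n, χ (dseq p (2 * n)) = p ^ n • b := fun n => by
    rw [dseq_two_mul, ← map_nsmul]
    congr 1
    ext <;> simp
  obtain ⟨k, hk⟩ := AddCircle.exists_pow_nsmul_eq_zero_of_tendsto hp
    ((hχ.comp htwo).congr heven)
  have hodd : ∀ n ≥ k, χ (dseq p (2 * n + 1)) = χ (1, 0) := fun n hn => by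
    obtain ⟨t, ht⟩ := pow_dvd_fseq_succ p (g := k) (n := n)
      (hn.trans (Nat.le_mul_of_pos_left _ (by positivity)))
    have hsplit : ((1 : ZMod p), (p : ℤ) ^ k * t) = (1, 0) + t • (p ^ k • (0, 1)) := by
      ext <;> simp [mul_comm]
    rw [dseq_two_mul_add_one, ht, hsplit, map_add, map_zsmul, map_nsmul, hk, smul_zero, add_zero]
  exact tendsto_const_nhds_iff.mp
    ((hχ.comp ((tendsto_add_atTop_nat 1).comp htwo)).congr' (eventually_atTop.mpr ⟨k, hodd⟩))

theorem vonNeumannRadical_tau {p : ℕ} (hp : 2 ≤ p) :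
    @vonNeumannRadical _ _ (tau p) = (⊤ : AddSubgroup (ZMod p)).prod ⊥ := by
  let := tau p
  have : NeZero p := ⟨by omega⟩
  apply le_antisymm
  · intro x hx
    refine AddSubgroup.mem_prod.mpr ⟨trivial, ?_⟩
    by_contra h2
    have hχ := AddSubgroup.mem_iInf.mp hx ⟨sndChar p (p ^ x.2.natAbs), continuous_sndChar p _⟩
    exact Int.not_pow_natAbs_dvd hp h2 (by exact_mod_cast sndChar_eq_zero_iff.mp hχ)
  · rintro ⟨a, b⟩ hx
    obtain ⟨-, rfl : b = 0⟩ := AddSubgroup.mem_prod.mp hx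
    refine AddSubgroup.mem_iInf.mpr fun χ => ?_
    have h10 := eq_zero_of_tendsto_comp_dseq (by omega) χ.toAddMonoidHom
      ((χ.continuous.tendsto' 0 0 (map_zero χ)).comp (tendsto_dseq_tau p))
    obtain ⟨z, rfl⟩ := ZMod.intCast_surjective a
    rw [AddMonoidHom.mem_ker, show ((z : ZMod p), (0 : ℤ)) = z • ((1 : ZMod p), (0 : ℤ)) by
      ext <;> simp, map_zsmul, h10, smul_zero]

end AmapExample

/-- There is a Hausdorff group topology `τ` on `(ℤ/pℤ) × ℤ` in which `d n → 0` and whose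
von Neumann radical is `(ℤ/pℤ) × {0}`; in particular it is almost maximally
almost-periodic. -/
theorem statement7 (p : ℕ) (hp : p.Prime) :
    ∃ τ : TopologicalSpace (ZMod p × ℤ), @IsTopologicalAddGroup (ZMod p × ℤ) τ _ ∧
      @T2Space (ZMod p × ℤ) τ ∧
      Filter.Tendsto (dseq p) Filter.atTop (@nhds (ZMod p × ℤ) τ 0) ∧
      @vonNeumannRadical (ZMod p × ℤ) _ τ =
        (⊤ : AddSubgroup (ZMod p)).prod (⊥ : AddSubgroup ℤ) :=
  ⟨AmapExample.tau p, AmapExample.isTopologicalAddGroup_tau p, AmapExample.t2Space_tau hp.two_le,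
    AmapExample.tendsto_dseq_tau p, AmapExample.vonNeumannRadical_tau hp.two_le⟩
end

section
/- Let q > 1 be an integer and define the sequence d in ℤ by d_{2n−1} = q + Σ_{i=0}^{n} q^{n³ − i·n} and d_{2n} = q^n for n ≥ 1. Then the subgroup of the circle 𝕋 = ℝ/ℤ characterized by d is the cyclic group of order q: {x ∈ 𝕋 : d_n • x → 0 as n → ∞} = {x ∈ 𝕋 : q • x = 0}. -/
/-!
Along the even terms `d (2n) = q ^ n`: near `0` multiplication by `q` scales the norm on `𝕋`
exactly by `q`, so `q ^ n • x → 0` forces `q ^ N • x = 0` for some `N`. All summands of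
`d (2n+1) - q` are multiples of `q ^ n`, hence `d (2n+1) • x = q • x` for `n ≥ N`, and the
limit gives `q • x = 0`. Conversely `q` divides every `d k` with `k ≥ 2`.
-/

/-- The sequence `d` in `ℤ`: `d (2n-1) = γ + ∑_{i=0}^{n} q^(n³ - i·n)` and
`d (2n) = q^n`. -/
def dZ (γ q : ℕ) : ℕ → ℤ := fun k =>
  if k % 2 = 1 then
    (γ : ℤ) + ∑ i ∈ Finset.range ((k + 1) / 2 + 1), (q : ℤ) ^ (((k + 1) / 2) ^ 3 - i * ((k + 1) / 2))
  else (q : ℤ) ^ (k / 2)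

open Filter Topology

lemma zsmul_eq_zero_of_dvd {G : Type*} [AddGroup G] {a b : ℤ} {x : G} (hab : a ∣ b)
    (hx : a • x = 0) : b • x = 0 :=
  addOrderOf_dvd_iff_zsmul_eq_zero.1 ((addOrderOf_dvd_iff_zsmul_eq_zero.2 hx).trans hab)

namespace AddCircle

lemma exists_coe_eq_abs_eq_norm (y : AddCircle (1 : ℝ)) :
    ∃ t : ℝ, (t : AddCircle (1 : ℝ)) = y ∧ |t| = ‖y‖ := by
  induction y using QuotientAddGroup.induction_on with
  | H r =>
    refine ⟨r - round r, ?_, by simp [norm_eq]⟩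
    rw [coe_sub, ← zsmul_one (round r), coe_zsmul, coe_period, zsmul_zero, sub_zero]

lemma norm_nsmul_eq_mul_norm_s15 {n : ℕ} {y : AddCircle (1 : ℝ)} (hy : n * ‖y‖ ≤ 1 / 2) :
    ‖n • y‖ = n * ‖y‖ := by
  obtain ⟨t, rfl, ht⟩ := exists_coe_eq_abs_eq_norm y
  have hnt : |n * t| = n * ‖(t : AddCircle (1 : ℝ))‖ := by rw [abs_mul, Nat.abs_cast, ht]
  rw [← coe_nsmul, nsmul_eq_mul, ← hnt, norm_coe_eq_abs_iff _ one_ne_zero, hnt]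
  simpa using hy

lemma exists_pow_nsmul_eq_zero_of_tendsto_s15 {q : ℕ} {x : AddCircle (1 : ℝ)}
    (h : Tendsto (fun n : ℕ => q ^ n • x) atTop (𝓝 0)) : ∃ N, q ^ N • x = 0 := by
  rcases q.eq_zero_or_pos with rfl | hq
  · exact ⟨1, by simp⟩
  have hsmall : ∀ᶠ n in atTop, (q : ℝ) * ‖q ^ n • x‖ < 1 / 2 :=
    (h.norm.const_mul (q : ℝ)).eventually (gt_mem_nhds (by simp))
  obtain ⟨N, hN⟩ := eventually_atTop.1 hsmall
  have hgrow : ∀ k, ‖q ^ (N + k) • x‖ = q ^ k * ‖q ^ N • x‖ := by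
    intro k
    induction k with
    | zero => simp
    | succ k ih =>
      rw [← add_assoc, pow_succ', mul_comm, mul_nsmul,
        norm_nsmul_eq_mul_norm_s15 (hN _ le_self_add).le, ih, pow_succ', mul_assoc]
  have hlim : Tendsto (fun k => ‖q ^ (N + k) • x‖) atTop (𝓝 0) := by
    simpa [add_comm] using (h.comp (tendsto_add_atTop_nat N)).norm
  refine ⟨N, norm_le_zero_iff.1 (ge_of_tendsto' hlim fun k => ?_)⟩
  rw [hgrow]
  exact le_mul_of_one_le_left (norm_nonneg _) (one_le_pow₀ (by exact_mod_cast hq))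

end AddCircle

lemma dZ_two_mul (γ q n : ℕ) : dZ γ q (2 * n) = (q : ℤ) ^ n := by
  simp [dZ]

lemma dZ_two_mul_add_one (γ q n : ℕ) :
    dZ γ q (2 * n + 1) =
      γ + ∑ i ∈ Finset.range (n + 2), (q : ℤ) ^ ((n + 1) ^ 3 - i * (n + 1)) := by
  have h : (2 * n + 1 + 1) / 2 = n + 1 := by omega
  simp [dZ, h]

lemma pow_dvd_dZ_two_mul_add_one_sub (γ q n : ℕ) :
    (q : ℤ) ^ n ∣ dZ γ q (2 * n + 1) - γ := by
  rw [dZ_two_mul_add_one, add_sub_cancel_left]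
  refine Finset.dvd_sum fun i hi => pow_dvd_pow _ ?_
  have hi : i ≤ n + 1 := Nat.lt_succ_iff.1 (Finset.mem_range.1 hi)
  have hexp : i * (n + 1) + n ≤ (n + 1) ^ 3 :=
    calc i * (n + 1) + n ≤ (n + 1) * (n + 1) + (n + 1) * (n + 1) * n := by
          gcongr; exact Nat.le_mul_of_pos_left n (by positivity)
      _ = (n + 1) ^ 3 := by ring
  omega

lemma dvd_dZ_self (q : ℕ) {k : ℕ} (hk : 2 ≤ k) : (q : ℤ) ∣ dZ q q k := by
  obtain ⟨n, rfl | rfl⟩ := k.even_or_odd'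
  · rw [dZ_two_mul]
    exact dvd_pow_self _ (by omega)
  · have hsub := (dvd_pow_self (q : ℤ) (by omega : n ≠ 0)).trans
      (pow_dvd_dZ_two_mul_add_one_sub q q n)
    simpa using dvd_sub_self_right.1 hsub

lemma dZ_two_mul_add_one_zsmul_eq {G : Type*} [AddCommGroup G] {γ q N n : ℕ} {x : G}
    (hx : q ^ N • x = 0) (hn : N ≤ n) : dZ γ q (2 * n + 1) • x = (γ : ℤ) • x := by
  have hxn : ((q : ℤ) ^ n) • x = 0 := by
    rw [← Nat.cast_pow, natCast_zsmul, ← Nat.add_sub_cancel' hn, pow_add, mul_nsmul, hx,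
      nsmul_zero]
  rw [← sub_eq_zero, ← sub_smul]
  exact zsmul_eq_zero_of_dvd (pow_dvd_dZ_two_mul_add_one_sub γ q n) hxn

theorem statement15_general (q : ℕ) :
    {x : AddCircle (1 : ℝ) |
        Filter.Tendsto (fun n : ℕ => dZ q q n • x) Filter.atTop (nhds 0)} =
      {x : AddCircle (1 : ℝ) | (q : ℤ) • x = 0} := by
  ext x
  refine ⟨fun h => ?_, fun hx => ?_⟩
  · obtain ⟨N, hN⟩ : ∃ N, q ^ N • x = 0 := by
      refine AddCircle.exists_pow_nsmul_eq_zero_of_tendsto_s15 ?_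
      refine (h.comp (strictMono_mul_left_of_pos two_pos).tendsto_atTop).congr fun n => ?_
      rw [Function.comp_apply, dZ_two_mul, ← Nat.cast_pow, natCast_zsmul]
    have hodd : Tendsto (fun n : ℕ => dZ q q (2 * n + 1) • x) atTop (𝓝 ((q : ℤ) • x)) :=
      tendsto_const_nhds.congr' <| (eventually_ge_atTop N).mono fun n hn =>
        (dZ_two_mul_add_one_zsmul_eq hN hn).symm
    have hodd_index : Tendsto (fun n : ℕ => 2 * n + 1) atTop atTop :=
      tendsto_atTop_atTop.2 fun b => ⟨b, fun n hn => by omega⟩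
    exact tendsto_nhds_unique hodd (h.comp hodd_index)
  · exact tendsto_const_nhds.congr' <| (eventually_ge_atTop 2).mono fun k hk =>
      (zsmul_eq_zero_of_dvd (dvd_dZ_self q hk) hx).symm

/-- For `γ = q > 1`, the subgroup of the circle `𝕋 = ℝ/ℤ` characterized by `d` is the
cyclic subgroup of order `q`. -/
theorem statement15 (q : ℕ) (hq : 1 < q) :
    {x : AddCircle (1 : ℝ) |
        Filter.Tendsto (fun n : ℕ => dZ q q n • x) Filter.atTop (nhds 0)} =
      {x : AddCircle (1 : ℝ) | (q : ℤ) • x = 0} :=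
  statement15_general q
end
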